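/- arXiv:0712.2788 — 6 statements merged into one kernel-verified Lean document; each statement's English description precedes it below -/
import Mathlib

section
/- Let u be a radially decreasing W^{1,p} solution of -Δ_p u = g(u) on the punctured unit ball (in radial coordinates) that is in addition twice continuously differentiable on (0,1). Then for every continuously differentiable η : ℝ → ℝ whose support is a compact subset of the open interval (0,1), one has ∫_0^1 r^{n-1} [ (p-1)|u'(r)|^{p-2} ((u'·η)'(r))^2 - g'(u(r)) (u'(r)·η(r))^2 ] dr = ∫_0^1 r^{n-1} |u'(r)|^p [ (p-1) η'(r)^2 - (n-1) η(r)^2 / r^2 ] dr. -/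
open MeasureTheory Set Real Filter

/-- The radial `W^{1,p}` norm of a radial function `u` with radial derivative `u'`
on the unit ball of `ℝ^n`, written in radial coordinates. -/
noncomputable def radialNorm (n : ℕ) (p : ℝ) (u u' : ℝ → ℝ) : ℝ :=
  (∫ r in Ioc (0:ℝ) 1, r ^ ((n : ℝ) - 1) * (|u r| ^ p + |u' r| ^ p)) ^ (1 / p)

/-- `u : (0,1] → ℝ` (with radial derivative `u'`) is a radially decreasing `W^{1,p}`
solution of `-Δ_p u = g(u)` on the punctured unit ball, in radial coordinates:
`u` is `C^1` on `(0,1]` with derivative `u'`, `u' < 0` on `(0,1)`,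
`r ↦ r^{n-1}|u'|^{p-2}u'` has derivative `-r^{n-1} g(u(r))` on `(0,1)`, and the radial
`W^{1,p}` norm of `u` is finite. -/
def IsRadialSolution (n : ℕ) (p : ℝ) (g : ℝ → ℝ) (u u' : ℝ → ℝ) : Prop :=
  (∀ r ∈ Ioc (0:ℝ) 1, HasDerivWithinAt u (u' r) (Ioc (0:ℝ) 1) r) ∧
  ContinuousOn u' (Ioc (0:ℝ) 1) ∧
  (∀ r ∈ Ioo (0:ℝ) 1, u' r < 0) ∧
  (∀ r ∈ Ioo (0:ℝ) 1,
    HasDerivAt (fun s : ℝ => s ^ ((n : ℝ) - 1) * |u' s| ^ (p - 2) * u' s)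
      (-(r ^ ((n : ℝ) - 1) * g (u r))) r) ∧
  IntegrableOn (fun r : ℝ => r ^ ((n : ℝ) - 1) * (|u r| ^ p + |u' r| ^ p)) (Ioc (0:ℝ) 1)

/-- Semi-stability of a radial solution: the second variation of energy is nonnegative
for every `C^1` test function with compact support in `(0,1)`. -/
def IsSemiStable (n : ℕ) (p : ℝ) (g : ℝ → ℝ) (u u' : ℝ → ℝ) : Prop :=
  ∀ ξ : ℝ → ℝ, ContDiff ℝ 1 ξ → IsCompact (tsupport ξ) → tsupport ξ ⊆ Ioo (0:ℝ) 1 →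
    0 ≤ ∫ r in Ioc (0:ℝ) 1,
        r ^ ((n : ℝ) - 1) *
          ((p - 1) * |u' r| ^ (p - 2) * (deriv ξ r) ^ 2 - deriv g (u r) * (ξ r) ^ 2)


/-! Written in non-divergence form, the equation reads
`g(u) = -|u'|^(p-2) ((p-1) u'' + (n-1) u' / r)` wherever `u' ≠ 0`. Substituting this for `g(u)`,
the difference of the two integrands becomes the exact derivative of
`F = -r^(n-1) g(u) u' η² - (n-1) r^(n-2) |u'|^p η²`, which vanishes outside the support of `η`;
hence the two integrals agree. -/

open Function (support notMem_support support_subset_iff')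

theorem hasDerivAt_abs_rpow_sub_two_mul_self {q v : ℝ} (hv : v ≠ 0) :
    HasDerivAt (fun w : ℝ => |w| ^ (q - 2) * w) ((q - 1) * |v| ^ (q - 2)) v := by
  have habs : 0 < |v| := abs_pos.mpr hv
  have h := ((hasDerivAt_abs hv).rpow_const (p := q - 2) (Or.inl habs.ne')).fun_mul
    (hasDerivAt_id' v)
  refine h.congr_deriv ?_
  rw [rpow_sub_one habs.ne', mul_comm _ v, ← mul_assoc, ← mul_assoc, mul_comm v,
    sign_mul_self]
  field_simp
  ring

theorem ContinuousOn.integrable_of_support_subset {f : ℝ → ℝ} {K : Set ℝ}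
    (hf : ContinuousOn f K) (hK : IsCompact K) (hfK : support f ⊆ K) : Integrable f :=
  (integrableOn_iff_integrable_of_support_subset hfK).mp (hf.integrableOn_compact hK)

theorem setIntegral_eq_of_hasDerivAt_sub {F f h : ℝ → ℝ} {K s : Set ℝ} (hK : IsCompact K)
    (hKs : K ⊆ s) (hFK : support F ⊆ K) (hfK : support f ⊆ K) (hhK : support h ⊆ K)
    (hf : ContinuousOn f K) (hh : ContinuousOn h K)
    (hderiv : ∀ x ∈ K, HasDerivAt F (f x - h x) x) :
    ∫ x in s, f x = ∫ x in s, h x := by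
  have hderiv' : ∀ x, HasDerivAt F (f x - h x) x := by
    intro x
    by_cases hx : x ∈ K
    · exact hderiv x hx
    · rw [notMem_support.mp (notMem_subset hfK hx), notMem_support.mp (notMem_subset hhK hx),
        sub_zero]
      exact HasDerivAt.of_notMem_tsupport (notMem_subset (closure_minimal hFK hK.isClosed) hx)
  have hfi := hf.integrable_of_support_subset hK hfK
  have hhi := hh.integrable_of_support_subset hK hhK
  have hFi := ContinuousOn.integrable_of_support_subset
    (fun x _ => (hderiv' x).continuousAt.continuousWithinAt) hK hFK
  have hzero := integral_eq_zero_of_hasDerivAt_of_integrable hderiv' (hfi.sub hhi) hFi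
  rw [integral_sub hfi hhi, sub_eq_zero] at hzero
  have hvanish {φ : ℝ → ℝ} (hφ : support φ ⊆ K) : ∀ x ∉ s, φ x = 0 := fun x hx =>
    notMem_support.mp (notMem_subset (hφ.trans hKs) hx)
  rwa [setIntegral_eq_integral_of_forall_compl_eq_zero (hvanish hfK),
    setIntegral_eq_integral_of_forall_compl_eq_zero (hvanish hhK)]

theorem eq_of_hasDerivAt_rpow_mul_abs_rpow_mul {k p x G v' : ℝ} {v : ℝ → ℝ} (hx : 0 < x)
    (hv0 : v x ≠ 0) (hv : HasDerivAt v v' x)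
    (hflux : HasDerivAt (fun s => s ^ k * |v s| ^ (p - 2) * v s) (-(x ^ k * G)) x) :
    G = -(|v x| ^ (p - 2) * ((p - 1) * v' + k * v x / x)) := by
  have h := (hasDerivAt_rpow_const (p := k) (Or.inl hx.ne')).fun_mul
    ((hasDerivAt_abs_rpow_sub_two_mul_self (q := p) hv0).comp x hv)
  simp only [Function.comp_def, ← mul_assoc] at h
  have hxk : 0 < x ^ k := rpow_pos_of_pos hx k
  have e := hflux.unique h
  rw [rpow_sub_one hx.ne'] at e
  apply mul_left_cancel₀ hxk.ne'
  linear_combination -e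

noncomputable def stabilityPotential (k p : ℝ) (g u v η : ℝ → ℝ) (r : ℝ) : ℝ :=
  -(r ^ k * g (u r) * v r * η r ^ 2) - k * r ^ (k - 1) * |v r| ^ p * η r ^ 2

theorem hasDerivAt_stabilityPotential_of_eq {k p x g' v' η' : ℝ} {g u v η : ℝ → ℝ}
    (hx : 0 < x) (hp : 1 < p) (hv0 : v x ≠ 0) (hu : HasDerivAt u (v x) x) (hv : HasDerivAt v v' x)
    (hg : HasDerivAt g g' (u x)) (hη : HasDerivAt η η' x)
    (hgu : g (u x) = -(|v x| ^ (p - 2) * ((p - 1) * v' + k * v x / x))) :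
    HasDerivAt (stabilityPotential k p g u v η)
      (x ^ k * ((p - 1) * |v x| ^ (p - 2) * (v' * η x + v x * η') ^ 2 - g' * (v x * η x) ^ 2)
        - x ^ k * |v x| ^ p * ((p - 1) * η' ^ 2 - k * η x ^ 2 / x ^ 2)) x := by
  have hxk := hasDerivAt_rpow_const (p := k) (Or.inl hx.ne')
  have hxk1 := hasDerivAt_rpow_const (p := k - 1) (Or.inl hx.ne')
  have hvp' := (hasDerivAt_abs_rpow (v x) hp).comp x hv
  have h := ((((hxk.fun_mul (hg.comp x hu)).fun_mul hv).fun_mul (hη.fun_pow 2)).fun_neg).fun_sub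
    (((hxk1.const_mul k).fun_mul hvp').fun_mul (hη.fun_pow 2))
  refine h.congr_deriv ?_
  have habs : 0 < |v x| := abs_pos.mpr hv0
  have hvp : |v x| ^ p = |v x| ^ (p - 2) * v x ^ 2 := by
    rw [← sq_abs, ← rpow_natCast, ← rpow_add habs]; norm_num
  simp only [Function.comp_apply, hgu, hvp, rpow_sub_one hx.ne', sub_sub, one_add_one_eq_two]
  rw [rpow_sub hx, rpow_two]
  field_simp
  ring

namespace IsRadialSolution

variable {n : ℕ} {p : ℝ} {g u u' : ℝ → ℝ} (hsol : IsRadialSolution n p g u u')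
include hsol

theorem deriv_ne_zero {x : ℝ} (hx : x ∈ Ioo (0:ℝ) 1) : u' x ≠ 0 :=
  (hsol.2.2.1 x hx).ne

theorem hasDerivAt {x : ℝ} (hx : x ∈ Ioo (0:ℝ) 1) : HasDerivAt u (u' x) x :=
  (hsol.1 x (Ioo_subset_Ioc_self hx)).hasDerivAt (Ioc_mem_nhds hx.1 hx.2)

theorem continuousOn : ContinuousOn u (Ioo (0:ℝ) 1) := fun _ hx =>
  (hsol.hasDerivAt hx).continuousAt.continuousWithinAt

theorem continuousOn_deriv : ContinuousOn u' (Ioo (0:ℝ) 1) :=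
  hsol.2.1.mono Ioo_subset_Ioc_self

theorem continuousOn_abs_deriv_rpow (e : ℝ) :
    ContinuousOn (fun r => |u' r| ^ e) (Ioo (0:ℝ) 1) :=
  hsol.continuousOn_deriv.abs.rpow_const fun _ hx =>
    Or.inl (abs_ne_zero.mpr (hsol.deriv_ne_zero hx))

theorem apply_eq_of_hasDerivAt_deriv {x v' : ℝ} (hx : x ∈ Ioo (0:ℝ) 1)
    (hv : HasDerivAt u' v' x) :
    g (u x) = -(|u' x| ^ (p - 2) * ((p - 1) * v' + ((n : ℝ) - 1) * u' x / x)) :=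
  eq_of_hasDerivAt_rpow_mul_abs_rpow_mul hx.1 (hsol.deriv_ne_zero hx) hv (hsol.2.2.2.1 x hx)

theorem hasDerivAt_stabilityPotential (hp : 1 < p) (hg : Differentiable ℝ g) {η : ℝ → ℝ}
    {x v' η' : ℝ} (hx : x ∈ Ioo (0:ℝ) 1) (hv : HasDerivAt u' v' x)
    (hη : HasDerivAt η η' x) :
    HasDerivAt (stabilityPotential ((n : ℝ) - 1) p g u u' η)
      (x ^ ((n : ℝ) - 1) * ((p - 1) * |u' x| ^ (p - 2) * (v' * η x + u' x * η') ^ 2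
          - deriv g (u x) * (u' x * η x) ^ 2)
        - x ^ ((n : ℝ) - 1) * |u' x| ^ p
          * ((p - 1) * η' ^ 2 - ((n : ℝ) - 1) * η x ^ 2 / x ^ 2)) x :=
  hasDerivAt_stabilityPotential_of_eq hx.1 hp (hsol.deriv_ne_zero hx) (hsol.hasDerivAt hx) hv
    (hg (u x)).hasDerivAt hη (hsol.apply_eq_of_hasDerivAt_deriv hx hv)

end IsRadialSolution

theorem stmt7_general (n : ℕ) (p : ℝ) (hp : 1 < p)
    (g u u' u'' : ℝ → ℝ) (hg : ContDiff ℝ 1 g)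
    (hsol : IsRadialSolution n p g u u')
    (hu'' : ∀ r ∈ Ioo (0:ℝ) 1, HasDerivAt u' (u'' r) r)
    (hu''cont : ContinuousOn u'' (Ioo (0:ℝ) 1))
    (η : ℝ → ℝ) (hη : ContDiff ℝ 1 η) (hηc : IsCompact (tsupport η))
    (hηs : tsupport η ⊆ Ioo (0:ℝ) 1) :
    ∫ r in Ioc (0:ℝ) 1, r ^ ((n : ℝ) - 1) *
        ((p - 1) * |u' r| ^ (p - 2) * (deriv (fun s : ℝ => u' s * η s) r) ^ 2
          - deriv g (u r) * (u' r * η r) ^ 2)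
      = ∫ r in Ioc (0:ℝ) 1, r ^ ((n : ℝ) - 1) * |u' r| ^ p *
          ((p - 1) * (deriv η r) ^ 2 - ((n : ℝ) - 1) * (η r) ^ 2 / r ^ 2) := by
  have hη' (x : ℝ) : HasDerivAt η (deriv η x) x :=
    (hη.differentiable one_ne_zero x).hasDerivAt
  have hprod : EqOn (deriv fun s => u' s * η s) (fun x => u'' x * η x + u' x * deriv η x)
      (Ioo 0 1) := fun x hx => ((hu'' x hx).mul (hη' x)).deriv
  have hvanish {x : ℝ} (hx : x ∉ tsupport η) :
      η x = 0 ∧ deriv η x = 0 ∧ deriv (fun s => u' s * η s) x = 0 :=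
    ⟨image_eq_zero_of_notMem_tsupport hx, deriv_of_notMem_tsupport hx,
      deriv_of_notMem_tsupport (notMem_subset tsupport_mul_subset_right hx)⟩
  -- local facts for `fun_prop`
  have hucont := hsol.continuousOn
  have hu'cont := hsol.continuousOn_deriv
  have hu'pow := hsol.continuousOn_abs_deriv_rpow
  have hg'cont := hg.continuous_deriv le_rfl
  have hηcont := hη.continuous
  have hη'cont := hη.continuous_deriv le_rfl
  have hprodc : ContinuousOn (deriv fun s => u' s * η s) (Ioo 0 1) :=
    ContinuousOn.congr (by fun_prop) hprod
  have hrpow : ContinuousOn (fun r : ℝ => r ^ ((n : ℝ) - 1)) (Ioo 0 1) :=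
    continuousOn_id.rpow_const fun x hx => Or.inl hx.1.ne'
  have hsq : ∀ x ∈ Ioo (0:ℝ) 1, x ^ 2 ≠ 0 := fun x hx => pow_ne_zero 2 hx.1.ne'
  refine setIntegral_eq_of_hasDerivAt_sub (F := stabilityPotential ((n : ℝ) - 1) p g u u' η) hηc
    (hηs.trans Ioo_subset_Ioc_self)
    (support_subset_iff'.mpr fun x hx => by simp [stabilityPotential, (hvanish hx).1])
    (support_subset_iff'.mpr fun x hx => by simp [(hvanish hx).1, (hvanish hx).2.2])
    (support_subset_iff'.mpr fun x hx => by simp [(hvanish hx).1, (hvanish hx).2.1])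
    (ContinuousOn.mono (by fun_prop) hηs)
    (ContinuousOn.mono (by fun_prop (disch := assumption)) hηs)
    fun x hx => ?_
  rw [hprod (hηs hx)]
  exact hsol.hasDerivAt_stabilityPotential hp (hg.differentiable one_ne_zero) (hηs hx)
    (hu'' x (hηs hx)) (hη' x)

theorem stmt7 (n : ℕ) (hn : 1 ≤ n) (p : ℝ) (hp : 1 < p)
    (g u u' u'' : ℝ → ℝ) (hg : ContDiff ℝ 1 g)
    (hsol : IsRadialSolution n p g u u')
    (hu'' : ∀ r ∈ Ioo (0:ℝ) 1, HasDerivAt u' (u'' r) r)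
    (hu''cont : ContinuousOn u'' (Ioo (0:ℝ) 1))
    (η : ℝ → ℝ) (hη : ContDiff ℝ 1 η) (hηc : IsCompact (tsupport η))
    (hηs : tsupport η ⊆ Ioo (0:ℝ) 1) :
    ∫ r in Ioc (0:ℝ) 1, r ^ ((n : ℝ) - 1) *
        ((p - 1) * |u' r| ^ (p - 2) * (deriv (fun s : ℝ => u' s * η s) r) ^ 2
          - deriv g (u r) * (u' r * η r) ^ 2)
      = ∫ r in Ioc (0:ℝ) 1, r ^ ((n : ℝ) - 1) * |u' r| ^ p *
          ((p - 1) * (deriv η r) ^ 2 - ((n : ℝ) - 1) * (η r) ^ 2 / r ^ 2) :=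
  stmt7_general n p hp g u u' u'' hg hsol hu'' hu''cont η hη hηc hηs
end

section
/- Let n and p be real numbers with n > p > 1, and define u : (0,1] → ℝ by u(r) = -p·log r. Then u'(r) = -p/r < 0 for all r ∈ (0,1], the function r ↦ r^{n-1}|u'(r)|^{p-2}u'(r) has derivative equal to -r^{n-1}·p^{p-1}(n-p)·e^{u(r)} at every r ∈ (0,1), and ∫_0^1 r^{n-1}(|u(r)|^p + |u'(r)|^p) dr < ∞. -/
/-!
For `u = -p log r` the flux `r^(n-1) |u'|^(p-2) u'` is the pure power `-p^(p-1) r^(n-p)`, whose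
derivative `-(n-p) p^(p-1) r^(n-p-1)` equals `-λ* r^(n-1) e^u` since `e^u = r^(-p)`.
In the energy, `r^(n-1) |u'|^p = p^p r^(n-p-1)` is integrable because `n - p - 1 > -1`, and the
logarithmic term is dominated by a power of `r` via `|log r| ≤ r^(-ε) / ε`.
-/

open MeasureTheory Set Real Filter

lemma abs_neg_div_rpow {p r : ℝ} (hp : 0 ≤ p) (hr : 0 < r) (q : ℝ) :
    |(-p / r)| ^ q = p ^ q * r ^ (-q) := by
  rw [abs_div, abs_neg, abs_of_nonneg hp, abs_of_pos hr, div_rpow hp hr.le, rpow_neg hr.le,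
    div_eq_mul_inv]

lemma flux_eq_neg_mul_rpow {n p s : ℝ} (hp : 0 < p) (hs : 0 < s) :
    s ^ (n - 1) * |(-p / s)| ^ (p - 2) * (-p / s) = -(p ^ (p - 1)) * s ^ (n - p) := by
  rw [abs_neg_div_rpow hp.le hs, show p - 1 = (p - 2) + 1 by ring, rpow_add hp, rpow_one,
    show n - p = (n - 1) + -(p - 2) + -1 by ring, rpow_add hs, rpow_add hs, rpow_neg_one]
  ring

lemma hasDerivAt_flux {n p r : ℝ} (hp : 0 < p) (hr : 0 < r) :
    HasDerivAt (fun s : ℝ => s ^ (n - 1) * |(-p / s)| ^ (p - 2) * (-p / s))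
      (-(r ^ (n - 1) * (p ^ (p - 1) * (n - p)) * exp (-p * log r))) r := by
  have hflux : (fun s : ℝ => s ^ (n - 1) * |(-p / s)| ^ (p - 2) * (-p / s))
      =ᶠ[nhds r] fun s => -(p ^ (p - 1)) * s ^ (n - p) := by
    filter_upwards [Ioi_mem_nhds hr] with s hs using flux_eq_neg_mul_rpow hp hs
  have hvalue : -(r ^ (n - 1) * (p ^ (p - 1) * (n - p)) * exp (-p * log r))
      = -(p ^ (p - 1)) * ((n - p) * r ^ (n - p - 1)) := by
    rw [mul_comm (-p), ← rpow_def_of_pos hr, show n - p - 1 = (n - 1) + -p by ring,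
      rpow_add hr]
    ring
  rw [hvalue]
  exact ((hasDerivAt_rpow_const (Or.inl hr.ne')).const_mul _).congr_of_eventuallyEq hflux

lemma integrableOn_Ioc_zero_one_rpow {a : ℝ} (ha : -1 < a) :
    IntegrableOn (fun r : ℝ => r ^ a) (Ioc 0 1) := by
  simpa [intervalIntegrable_iff_integrableOn_Ioc_of_le zero_le_one] using
    intervalIntegral.intervalIntegrable_rpow' ha (a := 0) (b := 1)

lemma abs_log_rpow_le {r q ε : ℝ} (hr0 : 0 < r) (hr1 : r ≤ 1) (hq : 0 ≤ q) (hε : 0 < ε) :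
    |log r| ^ q ≤ ε⁻¹ ^ q * r ^ (-(ε * q)) := by
  have hlog : |log r| ≤ ε⁻¹ * r ^ (-ε) := by
    have h := (abs_log_mul_self_rpow_lt r ε hr0 hr1 hε).le
    rw [abs_mul, abs_of_pos (rpow_pos_of_pos hr0 ε), ← le_div_iff₀ (rpow_pos_of_pos hr0 ε)] at h
    rwa [rpow_neg hr0.le, ← div_eq_mul_inv, ← one_div]
  calc |log r| ^ q ≤ (ε⁻¹ * r ^ (-ε)) ^ q := rpow_le_rpow (abs_nonneg _) hlog hq
    _ = ε⁻¹ ^ q * r ^ (-(ε * q)) := by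
      rw [mul_rpow (inv_nonneg.2 hε.le) (rpow_nonneg hr0.le _), ← rpow_mul hr0.le, neg_mul]

lemma integrableOn_rpow_mul_abs_log_rpow {a q : ℝ} (ha : -1 < a) (hq : 0 ≤ q) :
    IntegrableOn (fun r : ℝ => r ^ a * |log r| ^ q) (Ioc 0 1) := by
  -- small enough that the majorant `r ^ (a - ε q)` keeps its exponent above `(a - 1) / 2 > -1`
  set ε := (a + 1) / (2 * (q + 1))
  have ha1 : 0 < a + 1 := by linarith
  have hε : 0 < ε := by positivity
  have hεq : ε * q ≤ (a + 1) / 2 := by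
    rw [div_mul_eq_mul_div, div_le_div_iff₀ (by positivity) two_pos]
    nlinarith
  refine ((integrableOn_Ioc_zero_one_rpow (a := a + -(ε * q)) (by linarith)).const_mul
    (ε⁻¹ ^ q)).mono' (by fun_prop) ?_
  filter_upwards [ae_restrict_mem measurableSet_Ioc] with r ⟨hr0, hr1⟩
  rw [norm_of_nonneg (by positivity), rpow_add hr0]
  calc r ^ a * |log r| ^ q ≤ r ^ a * (ε⁻¹ ^ q * r ^ (-(ε * q))) :=
        mul_le_mul_of_nonneg_left (abs_log_rpow_le hr0 hr1 hq hε) (by positivity)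
    _ = _ := by ring

theorem stmt11 (n p : ℝ) (hp : 1 < p) (hn : p < n) :
    (∀ r ∈ Ioc (0:ℝ) 1,
      HasDerivAt (fun s : ℝ => -p * Real.log s) (-p / r) r ∧ -p / r < 0) ∧
    (∀ r ∈ Ioo (0:ℝ) 1,
      HasDerivAt (fun s : ℝ => s ^ (n - 1) * |(-p / s)| ^ (p - 2) * (-p / s))
        (-(r ^ (n - 1) * (p ^ (p - 1) * (n - p)) * Real.exp (-p * Real.log r))) r) ∧
    IntegrableOn
      (fun r : ℝ => r ^ (n - 1) * (|(-p * Real.log r)| ^ p + |(-p / r)| ^ p))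
      (Ioc (0:ℝ) 1) := by
  have hp0 : 0 < p := by linarith
  refine ⟨fun r hr => ⟨?_, div_neg_of_neg_of_pos (by linarith) hr.1⟩,
    fun r hr => hasDerivAt_flux hp0 hr.1, ?_⟩
  · simpa [div_eq_mul_inv] using (hasDerivAt_log hr.1.ne').const_mul (-p)
  have henergy : IntegrableOn
      (fun r : ℝ => p ^ p * (r ^ (n - 1) * |log r| ^ p) + p ^ p * r ^ (n - p - 1)) (Ioc 0 1) :=
    ((integrableOn_rpow_mul_abs_log_rpow (by linarith) hp0.le).const_mul _).add
      ((integrableOn_Ioc_zero_one_rpow (by linarith)).const_mul _)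
  refine henergy.congr_fun (fun r hr => ?_) measurableSet_Ioc
  dsimp only
  rw [abs_neg_div_rpow hp0.le hr.1, abs_mul, abs_neg, abs_of_pos hp0,
    mul_rpow hp0.le (abs_nonneg _), show n - p - 1 = (n - 1) + -p by ring, rpow_add hr.1]
  ring
end

section
/- Let n and p be real numbers with p > 1 and n ≥ p + 4p/(p-1). Then for every continuously differentiable ξ : ℝ → ℝ whose support is a compact subset of the open interval (0,1), one has p^{p-1}(n-p) ∫_0^1 r^{n-1-p} ξ(r)^2 dr ≤ (p-1) p^{p-2} ∫_0^1 r^{n+1-p} ξ'(r)^2 dr. -/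
/-!
With `c = n - p` the claim reduces to the weighted Hardy inequality
`(c / 2)^2 ∫ r^(c-1) ξ^2 ≤ ∫ r^(c+1) ξ'^2`, because `p^(p-1) = p · p^(p-2)` and the
hypothesis on `n` amounts to `p c ≤ (p - 1) (c / 2)^2`. The Hardy inequality follows by
integrating the identity
`r^(c-1) (c ξ / 2 + r ξ')^2 = r^(c+1) ξ'^2 - (c / 2)^2 r^(c-1) ξ^2 + (c / 2) (r^c ξ^2)'`:
the left side is nonnegative and the derivative integrates to zero since `ξ` has compact
support in `(0, ∞)`.
-/

open MeasureTheory Set Real Filter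

theorem hasDerivAt_rpow_mul_sq {ξ : ℝ → ℝ} (hξ : Differentiable ℝ ξ) (c : ℝ) {r : ℝ}
    (hr : 0 < r) :
    HasDerivAt (fun r => r ^ c * ξ r ^ 2)
      (c * r ^ (c - 1) * ξ r ^ 2 + r ^ c * (2 * ξ r * deriv ξ r)) r := by
  refine ((hasDerivAt_rpow_const (p := c) (Or.inl hr.ne')).fun_mul
    ((hξ r).hasDerivAt.fun_pow 2)).congr_deriv ?_
  norm_num

theorem intervalIntegrable_rpow_mul {a b : ℝ} (h0 : (0 : ℝ) ∉ uIcc a b) (s : ℝ)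
    {g : ℝ → ℝ} (hg : Continuous g) : IntervalIntegrable (fun r => r ^ s * g r) volume a b :=
  (intervalIntegral.intervalIntegrable_rpow (Or.inr h0)).mul_continuousOn hg.continuousOn

theorem intervalIntegrable_deriv_rpow_mul_sq {ξ : ℝ → ℝ} (hξ : ContDiff ℝ 1 ξ)
    {a b : ℝ} (h0 : (0 : ℝ) ∉ uIcc a b) (c : ℝ) : IntervalIntegrable
      (fun r => c * r ^ (c - 1) * ξ r ^ 2 + r ^ c * (2 * ξ r * deriv ξ r)) volume a b := by
  have hcξ' : Continuous (deriv ξ) := hξ.continuous_deriv le_rfl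
  simpa only [mul_assoc] using
    ((intervalIntegrable_rpow_mul h0 (c - 1) (g := fun r => ξ r ^ 2) (by fun_prop)).const_mul
      c).add (intervalIntegrable_rpow_mul h0 c (g := fun r => 2 * ξ r * deriv ξ r) (by fun_prop))

theorem integral_deriv_rpow_mul_sq_eq_zero {ξ : ℝ → ℝ} (hξ : ContDiff ℝ 1 ξ) {a b : ℝ}
    (hpos : ∀ r ∈ uIcc a b, 0 < r) (hξa : ξ a = 0) (hξb : ξ b = 0) (c : ℝ) :
    ∫ r in a..b, (c * r ^ (c - 1) * ξ r ^ 2 + r ^ c * (2 * ξ r * deriv ξ r)) = 0 := by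
  rw [intervalIntegral.integral_eq_sub_of_hasDerivAt
    (fun r hr => hasDerivAt_rpow_mul_sq (hξ.differentiable one_ne_zero) c (hpos r hr))
    (intervalIntegrable_deriv_rpow_mul_sq hξ (fun h => (hpos 0 h).false) c), hξa, hξb]
  simp

theorem weighted_hardy_intervalIntegral {ξ : ℝ → ℝ} (hξ : ContDiff ℝ 1 ξ) {a b : ℝ}
    (ha : 0 < a) (hab : a ≤ b) (hξa : ξ a = 0) (hξb : ξ b = 0) (c : ℝ) :
    (c / 2) ^ 2 * ∫ r in a..b, r ^ (c - 1) * ξ r ^ 2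
      ≤ ∫ r in a..b, r ^ (c + 1) * deriv ξ r ^ 2 := by
  have hpos : ∀ r ∈ uIcc a b, 0 < r := fun r hr => ha.trans_le (uIcc_of_le hab ▸ hr).1
  have h0 : (0 : ℝ) ∉ uIcc a b := fun h => (hpos 0 h).false
  have hcξ' : Continuous (deriv ξ) := hξ.continuous_deriv le_rfl
  have hI := intervalIntegrable_rpow_mul h0 (c - 1) (g := fun r => ξ r ^ 2) (by fun_prop)
  have hJ := intervalIntegrable_rpow_mul h0 (c + 1) (g := fun r => deriv ξ r ^ 2) (by fun_prop)
  have hsquare : 0 ≤ ∫ r in a..b, r ^ (c - 1) * (c / 2 * ξ r + r * deriv ξ r) ^ 2 :=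
    intervalIntegral.integral_nonneg hab fun r hr => by
      have := ha.trans_le hr.1
      positivity
  have hexpand : ∫ r in a..b, r ^ (c - 1) * (c / 2 * ξ r + r * deriv ξ r) ^ 2
      = ∫ r in a..b, (r ^ (c + 1) * deriv ξ r ^ 2 - (c / 2) ^ 2 * (r ^ (c - 1) * ξ r ^ 2)
          + c / 2 * (c * r ^ (c - 1) * ξ r ^ 2 + r ^ c * (2 * ξ r * deriv ξ r))) := by
    refine intervalIntegral.integral_congr fun r hr => ?_
    have hr := hpos r hr
    have h1 : r ^ c = r ^ (c - 1) * r := by rw [← rpow_add_one hr.ne']; ring_nf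
    have h2 : r ^ (c + 1) = r ^ (c - 1) * r ^ 2 := by
      rw [← rpow_natCast, ← rpow_add hr]; ring_nf
    simp only [h1, h2]
    ring
  rw [hexpand, intervalIntegral.integral_add (hJ.sub (hI.const_mul _))
      ((intervalIntegrable_deriv_rpow_mul_sq hξ h0 c).const_mul _),
    intervalIntegral.integral_sub hJ (hI.const_mul _), intervalIntegral.integral_const_mul,
    intervalIntegral.integral_const_mul, integral_deriv_rpow_mul_sq_eq_zero hξ hpos hξa hξb c]
    at hsquare
  linarith

theorem IsCompact.exists_Ioo_superset_of_subset_Ioi {K : Set ℝ} (hK : IsCompact K)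
    (hpos : K ⊆ Ioi 0) : ∃ a b, 0 < a ∧ a ≤ b ∧ K ⊆ Ioo a b := by
  obtain ⟨m, hmK, hm⟩ := (hK.insert 1).exists_isLeast (insert_nonempty 1 K)
  obtain ⟨M, -, hM⟩ := (hK.insert 1).exists_isGreatest (insert_nonempty 1 K)
  have hm0 : 0 < m := by
    rcases hmK with rfl | hmK
    exacts [one_pos, hpos hmK]
  have hmM : m ≤ M := hM hmK
  exact ⟨m / 2, M + 1, by positivity, by linarith,
    fun x hx => ⟨by linarith [hm (mem_insert_of_mem 1 hx)],
      by linarith [hM (mem_insert_of_mem 1 hx)]⟩⟩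

theorem setIntegral_eq_intervalIntegral_of_support_subset {f : ℝ → ℝ} {s : Set ℝ}
    {a b : ℝ} (hs : Function.support f ⊆ s) (hab : Function.support f ⊆ Ioc a b) :
    ∫ x in s, f x = ∫ x in a..b, f x := by
  rw [setIntegral_eq_integral_of_forall_compl_eq_zero
      fun x hx => Function.notMem_support.1 fun h => hx (hs h),
    intervalIntegral.integral_eq_integral_of_support_subset hab]

theorem weighted_hardy_setIntegral {ξ : ℝ → ℝ} (hξ : ContDiff ℝ 1 ξ)
    (hξc : IsCompact (tsupport ξ)) (hpos : tsupport ξ ⊆ Ioi 0) {s : Set ℝ}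
    (hs : tsupport ξ ⊆ s) (c : ℝ) :
    (c / 2) ^ 2 * ∫ r in s, r ^ (c - 1) * ξ r ^ 2
      ≤ ∫ r in s, r ^ (c + 1) * deriv ξ r ^ 2 := by
  obtain ⟨a, b, ha, hab, hsub⟩ := hξc.exists_Ioo_superset_of_subset_Ioi hpos
  have hinterval : ∀ g : ℝ → ℝ, (∀ x ∉ tsupport ξ, g x = 0) →
      ∫ r in s, g r = ∫ r in a..b, g r := fun g hg =>
    have hg' := Function.support_subset_iff'.2 hg
    setIntegral_eq_intervalIntegral_of_support_subset (hg'.trans hs)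
      (hg'.trans (hsub.trans Ioo_subset_Ioc_self))
  rw [hinterval _ fun x hx => by simp [image_eq_zero_of_notMem_tsupport hx],
    hinterval _ fun x hx => by simp [deriv_of_notMem_tsupport hx]]
  exact weighted_hardy_intervalIntegral hξ ha hab
    (image_eq_zero_of_notMem_tsupport fun h => lt_irrefl a (hsub h).1)
    (image_eq_zero_of_notMem_tsupport fun h => lt_irrefl b (hsub h).2) c

theorem stmt12 (n p : ℝ) (hp : 1 < p) (hn : p + 4 * p / (p - 1) ≤ n)
    (ξ : ℝ → ℝ) (hξ : ContDiff ℝ 1 ξ) (hξc : IsCompact (tsupport ξ))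
    (hξs : tsupport ξ ⊆ Ioo (0:ℝ) 1) :
    p ^ (p - 1) * (n - p) * ∫ r in Ioc (0:ℝ) 1, r ^ (n - 1 - p) * (ξ r) ^ 2
      ≤ (p - 1) * p ^ (p - 2) * ∫ r in Ioc (0:ℝ) 1, r ^ (n + 1 - p) * (deriv ξ r) ^ 2 := by
  have hardy := weighted_hardy_setIntegral hξ hξc (hξs.trans Ioo_subset_Ioi_self)
    (hξs.trans Ioo_subset_Ioc_self) (n - p)
  rw [show n - p - 1 = n - 1 - p by ring, show n - p + 1 = n + 1 - p by ring] at hardy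
  set I := ∫ r in Ioc (0:ℝ) 1, r ^ (n - 1 - p) * (ξ r) ^ 2
  have hI : 0 ≤ I := setIntegral_nonneg measurableSet_Ioc fun r hr => by
    have := hr.1
    positivity
  have hp1 : 0 < p - 1 := sub_pos.2 hp
  have hconst : 4 * p ≤ (p - 1) * (n - p) := by
    rw [← div_le_iff₀' hp1]
    linarith
  have hnp : 0 < n - p := by nlinarith
  have hpow : p ^ (p - 1) = p ^ (p - 2) * p := by
    rw [← rpow_add_one (by linarith)]
    ring_nf
  have hpow_pos : 0 < p ^ (p - 2) := rpow_pos_of_pos (by linarith) _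
  calc p ^ (p - 1) * (n - p) * I ≤ (p - 1) * p ^ (p - 2) * (((n - p) / 2) ^ 2 * I) := by
        rw [hpow]
        nlinarith [mul_nonneg (mul_nonneg (mul_nonneg hpow_pos.le (sub_nonneg.2 hconst)) hI) hnp.le]
    _ ≤ _ := by gcongr
end

section
/- Let n, p, m be real numbers with p > 1, m > p - 1, and n > mp/(m-(p-1)). Set β := p/(m-(p-1)) and λ* := β^{p-1}(n - βm), and define u : (0,1] → ℝ by u(r) = r^{-β} - 1. Then u'(r) = -β r^{-β-1} < 0 for all r ∈ (0,1], and the function r ↦ r^{n-1}|u'(r)|^{p-2}u'(r) has derivative equal to -r^{n-1}·λ*·(1+u(r))^m at every r ∈ (0,1). -/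
open MeasureTheory Set Real Filter


theorem stmt13 (n p m : ℝ) (hp : 1 < p) (hm : p - 1 < m)
    (hn : m * p / (m - (p - 1)) < n)
    (β lam : ℝ) (hβ : β = p / (m - (p - 1))) (hlam : lam = β ^ (p - 1) * (n - β * m)) :
    (∀ r ∈ Ioc (0:ℝ) 1,
      HasDerivAt (fun s : ℝ => s ^ (-β) - 1) (-β * r ^ (-β - 1)) r ∧
        -β * r ^ (-β - 1) < 0) ∧
    (∀ r ∈ Ioo (0:ℝ) 1,
      HasDerivAt
        (fun s : ℝ => s ^ (n - 1) * |(-β * s ^ (-β - 1))| ^ (p - 2) * (-β * s ^ (-β - 1)))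
        (-(r ^ (n - 1) * lam * (1 + (r ^ (-β) - 1)) ^ m)) r) := by
  have hden : (0:ℝ) < m - (p - 1) := by linarith
  have hβpos : 0 < β := by rw [hβ]; positivity
  have hkey : β * (m - (p - 1)) = p := by
    rw [hβ]; field_simp
  constructor
  · intro r hr
    constructor
    · have h := (Real.hasDerivAt_rpow_const (x := r) (p := -β) (Or.inl hr.1.ne'))
      simpa using h.sub_const 1
    · have h1 : (0:ℝ) < r ^ (-β - 1) := Real.rpow_pos_of_pos hr.1 _
      nlinarith
  · intro r hr
    set E : ℝ := n - 1 + (-β - 1) * (p - 1) with hE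
    have hEeq : E = n + -β * m := by
      have : β * m = p + β * (p - 1) := by nlinarith [hkey]
      rw [hE]; nlinarith [this]
    have hg : HasDerivAt (fun s : ℝ => -β ^ (p - 1) * s ^ E)
        (-β ^ (p - 1) * (E * r ^ (E - 1))) r :=
      (Real.hasDerivAt_rpow_const (x := r) (p := E) (Or.inl hr.1.ne')).const_mul _
    have heq : (fun s : ℝ => s ^ (n - 1) * |(-β * s ^ (-β - 1))| ^ (p - 2) * (-β * s ^ (-β - 1)))
        =ᶠ[nhds r] (fun s : ℝ => -β ^ (p - 1) * s ^ E) := by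
      filter_upwards [eventually_gt_nhds hr.1] with s hs
      have h1 : (0:ℝ) < s ^ (-β - 1) := Real.rpow_pos_of_pos hs _
      have habs : |(-β * s ^ (-β - 1))| = β * s ^ (-β - 1) := by
        rw [abs_of_neg (by nlinarith)]; ring
      have hb : β ^ (p - 1) = β ^ (p - 2) * β := by
        rw [show p - 1 = p - 2 + 1 by ring, Real.rpow_add_one hβpos.ne']
      have hsE : s ^ E = s ^ (n - 1) * s ^ ((-β - 1) * (p - 2)) * s ^ (-β - 1) := by
        rw [show E = (n - 1) + ((-β - 1) * (p - 2) + (-β - 1)) by rw [hE]; ring,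
          Real.rpow_add hs, Real.rpow_add hs, mul_assoc]
      rw [habs, Real.mul_rpow hβpos.le h1.le, ← Real.rpow_mul hs.le, hb, hsE]
      ring
    have hd : HasDerivAt (fun s : ℝ => s ^ (n - 1) * |(-β * s ^ (-β - 1))| ^ (p - 2) *
        (-β * s ^ (-β - 1))) (-β ^ (p - 1) * (E * r ^ (E - 1))) r :=
      hg.congr_of_eventuallyEq heq
    have hval : -β ^ (p - 1) * (E * r ^ (E - 1)) =
        -(r ^ (n - 1) * lam * (1 + (r ^ (-β) - 1)) ^ m) := by
      rw [show (1 : ℝ) + (r ^ (-β) - 1) = r ^ (-β) by ring, ← Real.rpow_mul hr.1.le,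
        show E - 1 = (n - 1) + -β * m by rw [hEeq]; ring, Real.rpow_add hr.1, hlam, hEeq]
      ring
    rw [← hval]
    exact hd
end

section
/- Let n, p, m be real numbers with p > 1, n > p + 4p/(p-1), m ≥ m_cs := ((p-1)n - 2√((p-1)(n-1)) + 2 - p) / (n - (p+2) - 2√((n-1)/(p-1))), and n > mp/(m-(p-1)). Set β := p/(m-(p-1)) and λ* := β^{p-1}(n - βm). Then for every continuously differentiable ξ : ℝ → ℝ whose support is a compact subset of the open interval (0,1), one has λ*·m ∫_0^1 r^{n-1-p-β(p-2)} ξ(r)^2 dr ≤ (p-1) β^{p-2} ∫_0^1 r^{n+1-p-β(p-2)} ξ'(r)^2 dr. -/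
/-!
Put `a = n - p - β (p - 2)`. Expanding `∫ r ^ (a - 1) (a ξ + 2 r ξ') ^ 2 ≥ 0` and integrating the
cross term `∫ r ^ a (ξ ^ 2)'` by parts gives the weighted Hardy inequality
`a ^ 2 ∫ r ^ (a - 1) ξ ^ 2 ≤ 4 ∫ r ^ (a + 1) ξ' ^ 2`, so it suffices to show
`4 λ* m ≤ (p - 1) β ^ (p - 2) a ^ 2`. Since `β (m - (p - 1)) = p` and `λ* m = β ^ (p - 2) βm (n - βm)`,
with `s = √((n - 1) / (p - 1))` one has
`(p - 1) a ^ 2 - 4 βm (n - βm) = (p - 1) ((n - p - 2 - β p) ^ 2 - 4 s ^ 2)`,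
and the hypothesis `m ≥ m_cs` says precisely that `n - p - 2 - β p ≥ 2 s`.
-/

open MeasureTheory Set Real

lemma Continuous.integrable_rpow_mul {q : ℝ → ℝ} (hq : Continuous q) {K : Set ℝ}
    (hK : IsCompact K) (hK0 : K ⊆ Ioi 0) (hqK : ∀ r ∉ K, q r = 0) (γ : ℝ) :
    Integrable fun r => r ^ γ * q r := by
  have hsupp : tsupport (fun r => r ^ γ * q r) ⊆ K :=
    closure_minimal (fun r hr => by_contra fun hrK => hr (by simp [hqK r hrK])) hK.isClosed
  refine Continuous.integrable_of_hasCompactSupport ?_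
    (hK.of_isClosed_subset (isClosed_tsupport _) hsupp)
  exact continuous_of_tsupport fun x hx =>
    (continuousAt_rpow_const x γ (Or.inl (hK0 (hsupp hx)).ne')).mul hq.continuousAt

section Hardy

variable {ξ : ℝ → ℝ}

lemma integral_rpow_mul_mul_deriv (e : ℝ) (hξ : ContDiff ℝ 1 ξ) (hc : HasCompactSupport ξ)
    (hs : tsupport ξ ⊆ Ioi 0) :
    2 * ∫ r in Ioi 0, r ^ (e + 1) * (ξ r * deriv ξ r)
      = -((e + 1) * ∫ r in Ioi 0, r ^ e * ξ r ^ 2) := by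
  have hξc := hξ.continuous
  have hξ'c := hξ.continuous_deriv le_rfl
  have hξ0 : ∀ r ∉ tsupport ξ, ξ r = 0 := fun r hr => image_eq_zero_of_notMem_tsupport hr
  have hξ0' : ∀ r ∉ Ioi 0, ξ r = 0 := fun r hr => hξ0 r fun h => hr (hs h)
  have hsq (γ : ℝ) : Integrable fun r => r ^ γ * ξ r ^ 2 :=
    Continuous.integrable_rpow_mul (q := fun r => ξ r ^ 2) (by fun_prop) hc hs
      (by simp +contextual [hξ0]) γ
  have hibp := integral_mul_deriv_eq_deriv_mul_of_integrable (u := fun r => r ^ (e + 1))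
    (v := fun r => ξ r ^ 2) (u' := fun r => (e + 1) * r ^ e)
    (v' := fun r => 2 * (ξ r * deriv ξ r))
    (fun x hx => by
      have hx0 : x ≠ 0 :=
        (hs (tsupport_comp_subset (g := fun y : ℝ => y ^ 2) (by simp) ξ hx)).ne'
      simpa using hasDerivAt_rpow_const (p := e + 1) (Or.inl hx0))
    (fun x _ => by
      simpa [mul_assoc] using (hξ.differentiable one_ne_zero x).hasDerivAt.fun_pow 2)
    (by simpa only [Pi.mul_def, mul_left_comm] using
      ((Continuous.integrable_rpow_mul (q := fun r => ξ r * deriv ξ r) (by fun_prop) hc hs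
        (by simp +contextual [hξ0]) (e + 1)).const_mul 2))
    (by simpa only [Pi.mul_def, mul_assoc] using (hsq e).const_mul (e + 1))
    (hsq (e + 1))
  simp only [mul_left_comm _ (2 : ℝ), mul_assoc, integral_const_mul] at hibp
  rw [setIntegral_eq_integral_of_forall_compl_eq_zero fun r hr => by simp [hξ0' r hr],
    setIntegral_eq_integral_of_forall_compl_eq_zero fun r hr => by simp [hξ0' r hr], hibp]

theorem hardy_inequality_rpow (e : ℝ) (hξ : ContDiff ℝ 1 ξ) (hc : HasCompactSupport ξ)
    (hs : tsupport ξ ⊆ Ioi 0) :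
    (e + 1) ^ 2 * ∫ r in Ioi 0, r ^ e * ξ r ^ 2
      ≤ 4 * ∫ r in Ioi 0, r ^ (e + 2) * deriv ξ r ^ 2 := by
  have hξc := hξ.continuous
  have hξ'c := hξ.continuous_deriv le_rfl
  have hξ0 : ∀ r ∉ tsupport ξ, ξ r = 0 := fun r hr => image_eq_zero_of_notMem_tsupport hr
  have hξ'0 : ∀ r ∉ tsupport ξ, deriv ξ r = 0 := fun r hr =>
    image_eq_zero_of_notMem_tsupport fun h => hr (tsupport_deriv_subset h)
  have hA := (Continuous.integrable_rpow_mul (q := fun r => ξ r ^ 2) (by fun_prop) hc hs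
    (by simp +contextual [hξ0]) e).integrableOn (s := Ioi 0)
  have hB := (Continuous.integrable_rpow_mul (q := fun r => deriv ξ r ^ 2) (by fun_prop) hc hs
    (by simp +contextual [hξ'0]) (e + 2)).integrableOn (s := Ioi 0)
  have hC := (Continuous.integrable_rpow_mul (q := fun r => ξ r * deriv ξ r) (by fun_prop) hc hs
    (by simp +contextual [hξ0]) (e + 1)).integrableOn (s := Ioi 0)
  have hsq : 0 ≤ ∫ r in Ioi 0, r ^ e * ((e + 1) * ξ r + 2 * r * deriv ξ r) ^ 2 :=
    setIntegral_nonneg measurableSet_Ioi fun r hr => by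
      have := rpow_nonneg (le_of_lt (mem_Ioi.mp hr)) e
      positivity
  have hexpand : ∫ r in Ioi 0, r ^ e * ((e + 1) * ξ r + 2 * r * deriv ξ r) ^ 2
      = (e + 1) ^ 2 * (∫ r in Ioi 0, r ^ e * ξ r ^ 2)
        + 4 * (∫ r in Ioi 0, r ^ (e + 2) * deriv ξ r ^ 2)
        + 2 * (e + 1) * (2 * ∫ r in Ioi 0, r ^ (e + 1) * (ξ r * deriv ξ r)) := by
    calc _ = ∫ r in Ioi 0, (e + 1) ^ 2 * (r ^ e * ξ r ^ 2) + 4 * (r ^ (e + 2) * deriv ξ r ^ 2)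
          + 2 * (e + 1) * (2 * (r ^ (e + 1) * (ξ r * deriv ξ r))) :=
          setIntegral_congr_fun measurableSet_Ioi fun r hr => by
            simp only [rpow_add (mem_Ioi.mp hr), rpow_one, rpow_two]
            ring
      _ = _ := by
        rw [integral_add ((hA.const_mul _).fun_add (hB.const_mul _)) ((hC.const_mul _).const_mul _),
          integral_add (hA.const_mul _) (hB.const_mul _)]
        simp only [integral_const_mul]
  rw [integral_rpow_mul_mul_deriv e hξ hc hs] at hexpand
  nlinarith

end Hardy

lemma setIntegral_Ioc_eq_setIntegral_Ioi {a b : ℝ} {f : ℝ → ℝ} (hf : ∀ r, b < r → f r = 0) :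
    ∫ r in Ioc a b, f r = ∫ r in Ioi a, f r :=
  (setIntegral_eq_of_subset_of_forall_sdiff_eq_zero measurableSet_Ioi Ioc_subset_Ioi_self
    fun r hr => hf r (not_le.1 fun h => hr.2 ⟨hr.1, h⟩)).symm

lemma sqrt_mul_eq_mul_sqrt_div {a b : ℝ} (ha : 0 < a) : √(a * b) = a * √(b / a) := by
  rw [show a * b = a ^ 2 * (b / a) by field_simp, sqrt_mul (sq_nonneg a), sqrt_sq ha.le]

section Constants

variable {n p : ℝ}

lemma two_sqrt_lt_of_lt (hp : 1 < p) (hn : p + 4 * p / (p - 1) < n) :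
    2 * √((n - 1) / (p - 1)) < n - (p + 2) := by
  have hp1 : 0 < p - 1 := by linarith
  have hnp : 4 * p < (p - 1) * (n - p) := (div_lt_iff₀' hp1).1 (by linarith)
  have ht0 : 0 < n - (p + 2) := pos_of_mul_pos_right (by linarith) hp1.le
  rw [← lt_div_iff₀' two_pos, sqrt_lt' (by positivity), div_lt_iff₀ hp1]
  nlinarith

lemma critical_exponent_eq (hp : 1 < p) (hD : n - (p + 2) - 2 * √((n - 1) / (p - 1)) ≠ 0) :
    ((p - 1) * n - 2 * √((p - 1) * (n - 1)) + 2 - p) / (n - (p + 2) - 2 * √((n - 1) / (p - 1)))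
      = p - 1 + p ^ 2 / (n - (p + 2) - 2 * √((n - 1) / (p - 1))) := by
  rw [sqrt_mul_eq_mul_sqrt_div (by linarith : 0 < p - 1)]
  field_simp
  ring

lemma sub_lt_and_two_sqrt_le_of_critical_le {m : ℝ} (hp : 1 < p)
    (hn : p + 4 * p / (p - 1) < n)
    (hm : ((p - 1) * n - 2 * √((p - 1) * (n - 1)) + 2 - p)
        / (n - (p + 2) - 2 * √((n - 1) / (p - 1))) ≤ m) :
    p - 1 < m ∧ 2 * √((n - 1) / (p - 1)) ≤ n - (p + 2) - p / (m - (p - 1)) * p := by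
  have hD : 0 < n - (p + 2) - 2 * √((n - 1) / (p - 1)) := by
    linarith [two_sqrt_lt_of_lt hp hn]
  rw [critical_exponent_eq hp hD.ne'] at hm
  have hfrac : 0 < p ^ 2 / (n - (p + 2) - 2 * √((n - 1) / (p - 1))) := by positivity
  have hm0 : 0 < m - (p - 1) := by linarith
  refine ⟨by linarith, ?_⟩
  have := (div_le_comm₀ hD hm0).1 (le_sub_iff_add_le'.2 hm)
  rw [div_mul_eq_mul_div, ← sq]
  linarith

lemma four_mul_le_mul_sq {β s : ℝ} (hp : 1 ≤ p) (hs : 0 ≤ s) (hs2 : (p - 1) * s ^ 2 = n - 1)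
    (h : 2 * s ≤ n - (p + 2) - β * p) :
    4 * (β * (p - 1) + p) * (n - (β * (p - 1) + p)) ≤ (p - 1) * (n - p - β * (p - 2)) ^ 2 := by
  have hfac : 0 ≤ (p - 1) * ((n - (p + 2) - β * p) - 2 * s) * ((n - (p + 2) - β * p) + 2 * s) :=
    mul_nonneg (mul_nonneg (by linarith) (by linarith)) (by linarith)
  linear_combination hfac - 4 * hs2

lemma four_mul_rpow_mul_le {m β : ℝ} (hp : 1 < p) (hn : 1 ≤ n) (hβ : 0 < β)
    (hβm : β * (m - (p - 1)) = p) (h : 2 * √((n - 1) / (p - 1)) ≤ n - (p + 2) - β * p) :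
    4 * (β ^ (p - 1) * (n - β * m) * m) ≤ (p - 1) * β ^ (p - 2) * (n - p - β * (p - 2)) ^ 2 := by
  have hs2 : (p - 1) * √((n - 1) / (p - 1)) ^ 2 = n - 1 := by
    rw [sq_sqrt (div_nonneg (by linarith) (by linarith)), mul_div_cancel₀ _ (by linarith)]
  have hβm' : β * m = β * (p - 1) + p := by linear_combination hβm
  calc 4 * (β ^ (p - 1) * (n - β * m) * m) = β ^ (p - 2) * (4 * (β * m) * (n - β * m)) := by
        rw [show p - 1 = p - 2 + 1 by ring, rpow_add_one hβ.ne']; ring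
    _ ≤ β ^ (p - 2) * ((p - 1) * (n - p - β * (p - 2)) ^ 2) := by
        rw [hβm']
        exact mul_le_mul_of_nonneg_left (four_mul_le_mul_sq hp.le (sqrt_nonneg _) hs2 h)
          (rpow_nonneg hβ.le _)
    _ = _ := by ring

end Constants

theorem stmt14_general (n p m : ℝ) (hp : 1 < p) (hn : p + 4 * p / (p - 1) < n)
    (hm : ((p - 1) * n - 2 * Real.sqrt ((p - 1) * (n - 1)) + 2 - p)
        / (n - (p + 2) - 2 * Real.sqrt ((n - 1) / (p - 1))) ≤ m)
    (β lam : ℝ) (hβ : β = p / (m - (p - 1))) (hlam : lam = β ^ (p - 1) * (n - β * m))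
    (ξ : ℝ → ℝ) (hξ : ContDiff ℝ 1 ξ) (hξc : IsCompact (tsupport ξ))
    (hξs : tsupport ξ ⊆ Ioo (0:ℝ) 1) :
    lam * m * ∫ r in Ioc (0:ℝ) 1, r ^ (n - 1 - p - β * (p - 2)) * (ξ r) ^ 2
      ≤ (p - 1) * β ^ (p - 2)
        * ∫ r in Ioc (0:ℝ) 1, r ^ (n + 1 - p - β * (p - 2)) * (deriv ξ r) ^ 2 := by
  obtain ⟨hmp, hcrit⟩ := sub_lt_and_two_sqrt_le_of_critical_le hp hn hm
  rw [← hβ] at hcrit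
  have hβ0 : 0 < β := hβ ▸ div_pos (by linarith) (sub_pos.2 hmp)
  have hn1 : 1 ≤ n := by have := div_pos (by linarith : 0 < 4 * p) (sub_pos.2 hp); linarith
  have hconst := hlam ▸ four_mul_rpow_mul_le hp hn1 hβ0
    (hβ ▸ div_mul_cancel₀ _ (sub_pos.2 hmp).ne') hcrit
  have hvanish (r : ℝ) (hr : 1 < r) : ξ r = 0 ∧ deriv ξ r = 0 :=
    have hr : r ∉ tsupport ξ := fun h => lt_asymm (hξs h).2 hr
    ⟨image_eq_zero_of_notMem_tsupport hr,
      image_eq_zero_of_notMem_tsupport fun h => hr (tsupport_deriv_subset h)⟩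
  rw [setIntegral_Ioc_eq_setIntegral_Ioi fun r hr => by simp [(hvanish r hr).1],
    setIntegral_Ioc_eq_setIntegral_Ioi fun r hr => by simp [(hvanish r hr).2]]
  have hHardy := hardy_inequality_rpow (n - 1 - p - β * (p - 2)) hξ hξc
    (hξs.trans Ioo_subset_Ioi_self)
  rw [show n - 1 - p - β * (p - 2) + 1 = n - p - β * (p - 2) by ring,
    show n - 1 - p - β * (p - 2) + 2 = n + 1 - p - β * (p - 2) by ring] at hHardy
  have hA : 0 ≤ ∫ r in Ioi (0:ℝ), r ^ (n - 1 - p - β * (p - 2)) * ξ r ^ 2 :=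
    setIntegral_nonneg measurableSet_Ioi fun r hr => by
      have := rpow_nonneg (le_of_lt (mem_Ioi.mp hr)) (n - 1 - p - β * (p - 2))
      positivity
  have hc0 : 0 ≤ (p - 1) * β ^ (p - 2) := mul_nonneg (by linarith) (rpow_nonneg hβ0.le _)
  nlinarith [mul_le_mul_of_nonneg_right hconst hA, mul_le_mul_of_nonneg_left hHardy hc0]

theorem stmt14 (n p m : ℝ) (hp : 1 < p) (hn : p + 4 * p / (p - 1) < n)
    (hm : ((p - 1) * n - 2 * Real.sqrt ((p - 1) * (n - 1)) + 2 - p)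
        / (n - (p + 2) - 2 * Real.sqrt ((n - 1) / (p - 1))) ≤ m)
    (hn' : m * p / (m - (p - 1)) < n)
    (β lam : ℝ) (hβ : β = p / (m - (p - 1))) (hlam : lam = β ^ (p - 1) * (n - β * m))
    (ξ : ℝ → ℝ) (hξ : ContDiff ℝ 1 ξ) (hξc : IsCompact (tsupport ξ))
    (hξs : tsupport ξ ⊆ Ioo (0:ℝ) 1) :
    lam * m * ∫ r in Ioc (0:ℝ) 1, r ^ (n - 1 - p - β * (p - 2)) * (ξ r) ^ 2
      ≤ (p - 1) * β ^ (p - 2)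
        * ∫ r in Ioc (0:ℝ) 1, r ^ (n + 1 - p - β * (p - 2)) * (deriv ξ r) ^ 2 :=
  stmt14_general n p m hp hn hm β lam hβ hlam ξ hξ hξc hξs
end

section
/- There exists a constant C depending only on n and p such that the following holds: if g is nonnegative, u is a radially decreasing W^{1,p} solution of -Δ_p u = g(u) on the punctured unit ball (in radial coordinates) with u(r) > 0 for r ∈ (0,1) and u(1) = 0, then for every r ∈ (0, 1/2], r^{n-1} |u'(r)|^{p-1} ≤ C ∫_0^{1/2} s^{n-1} u(s)^{p-1} ds. -/
open MeasureTheory Set Real Filter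

theorem stmt16 (n : ℕ) (hn : 1 ≤ n) (p : ℝ) (hp : 1 < p) :
    ∃ C : ℝ, 0 < C ∧ ∀ (g u u' : ℝ → ℝ), ContDiff ℝ 1 g → (∀ t : ℝ, 0 ≤ g t) →
      IsRadialSolution n p g u u' →
      (∀ r ∈ Ioo (0:ℝ) 1, 0 < u r) → u 1 = 0 →
      ∀ r ∈ Ioc (0:ℝ) (1/2), r ^ ((n : ℝ) - 1) * |u' r| ^ (p - 1)
        ≤ C * ∫ s in Ioc (0:ℝ) (1/2), s ^ ((n : ℝ) - 1) * (u s) ^ (p - 1) := by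
  have hn1 : (1:ℝ) ≤ (n:ℝ) := by exact_mod_cast hn
  have he0 : (0:ℝ) ≤ (n:ℝ) - 1 := by linarith
  have hp1 : (0:ℝ) < p - 1 := by linarith
  have hV : (0:ℝ) < (1/2:ℝ) ^ (n:ℝ) / n :=
    div_pos (Real.rpow_pos_of_pos (by norm_num) _) (by linarith)
  refine ⟨(4:ℝ) ^ (p-1) / ((1/2:ℝ) ^ (n:ℝ) / n),
    div_pos (Real.rpow_pos_of_pos (by norm_num) _) hV, ?_⟩
  intro g u u' hg hgnn hsol hupos hu1 r hr
  obtain ⟨hderiv, hcont', hneg, hFDeriv, hint⟩ := hsol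
  set e : ℝ := (n:ℝ) - 1 with he
  have hDA : ∀ x ∈ Ioo (0:ℝ) 1, HasDerivAt u (u' x) x := fun x hx =>
    (hderiv x ⟨hx.1, hx.2.le⟩).hasDerivAt (Ioc_mem_nhds hx.1 hx.2)
  have hcontu : ContinuousOn u (Ioc (0:ℝ) 1) := fun x hx =>
    (hderiv x hx).continuousWithinAt
  set F : ℝ → ℝ := fun s => s ^ e * |u' s| ^ (p-2) * u' s with hFdef
  have hFanti : AntitoneOn F (Ioo (0:ℝ) 1) := by
    apply antitoneOn_of_deriv_nonpos (convex_Ioo _ _)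
    · exact fun x hx => (hFDeriv x hx).continuousAt.continuousWithinAt
    · rw [interior_Ioo]
      exact fun x hx => (hFDeriv x hx).differentiableAt.differentiableWithinAt
    · rw [interior_Ioo]
      intro x hx
      rw [(hFDeriv x hx).deriv]
      have h1 : 0 ≤ x ^ e := Real.rpow_nonneg hx.1.le _
      have h2 := hgnn (u x)
      nlinarith
  have hFrep : ∀ x ∈ Ioo (0:ℝ) 1, F x = -(x ^ e * |u' x| ^ (p-1)) := by
    intro x hx
    have hne : u' x < 0 := hneg x hx
    have habs : |u' x| = -u' x := abs_of_neg hne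
    have hpos : (0:ℝ) < |u' x| := abs_pos.mpr hne.ne
    have h1 : |u' x| ^ (p - 1) = |u' x| ^ (p-2) * |u' x| := by
      rw [show p - 1 = (p-2) + 1 by ring, Real.rpow_add_one hpos.ne']
    simp only [hFdef]
    rw [h1, habs]
    ring
  -- the key monotone quantity
  have hrI : r ∈ Ioo (0:ℝ) 1 := ⟨hr.1, by linarith [hr.2]⟩
  set A : ℝ := r ^ e * |u' r| ^ (p-1) with hA
  have hA0 : 0 ≤ A := mul_nonneg (Real.rpow_nonneg hrI.1.le _)
    (Real.rpow_nonneg (abs_nonneg _) _)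
  set B : ℝ := A ^ (1/(p-1)) with hB
  have hB0 : 0 ≤ B := Real.rpow_nonneg hA0 _
  -- on [1/2, 3/4], -u' ≥ B
  have hBt : ∀ t ∈ Icc (1/2:ℝ) (3/4), B ≤ -u' t := by
    intro t ht
    have htI : t ∈ Ioo (0:ℝ) 1 := ⟨by linarith [ht.1], by linarith [ht.2]⟩
    have hmon := hFanti hrI htI (le_trans hr.2 ht.1)
    rw [hFrep r hrI, hFrep t htI] at hmon
    have h2 : t ^ e ≤ 1 := Real.rpow_le_one (by linarith [ht.1]) (by linarith [ht.2]) he0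
    have h3 : (0:ℝ) ≤ |u' t| ^ (p-1) := Real.rpow_nonneg (abs_nonneg _) _
    have hAt : A ≤ |u' t| ^ (p-1) := by nlinarith
    have h4 := Real.rpow_le_rpow hA0 hAt (by positivity : (0:ℝ) ≤ 1/(p-1))
    rw [← Real.rpow_mul (abs_nonneg _), mul_one_div, div_self hp1.ne', Real.rpow_one] at h4
    have := abs_of_neg (hneg t htI)
    rw [hB]; linarith
  -- FTC on [1/2, 3/4]
  have hsub34 : Icc (1/2:ℝ) (3/4) ⊆ Ioo (0:ℝ) 1 := fun x hx =>
    ⟨by linarith [hx.1], by linarith [hx.2]⟩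
  have hii : IntervalIntegrable u' volume (1/2) (3/4) := by
    apply ContinuousOn.intervalIntegrable
    rw [uIcc_of_le (by norm_num)]
    exact hcont'.mono (fun x hx => ⟨(hsub34 hx).1, (hsub34 hx).2.le⟩)
  have hftc : ∫ t in (1/2:ℝ)..(3/4), u' t = u (3/4) - u (1/2) := by
    apply intervalIntegral.integral_eq_sub_of_hasDerivAt _ hii
    intro x hx
    rw [uIcc_of_le (by norm_num)] at hx
    exact hDA x (hsub34 hx)
  have hmono : ∫ t in (1/2:ℝ)..(3/4), u' t ≤ ∫ _t in (1/2:ℝ)..(3/4), (-B) := by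
    apply intervalIntegral.integral_mono_on (by norm_num) hii intervalIntegrable_const
    intro x hx; linarith [hBt x hx]
  rw [hftc, intervalIntegral.integral_const] at hmono
  have hu34 : 0 < u (3/4) := hupos _ (by norm_num)
  have hB4 : B / 4 ≤ u (1/2) := by
    simp only [smul_eq_mul] at hmono
    nlinarith
  -- u s ≥ u (1/2) for s ∈ (0, 1/2]
  have husl : ∀ s ∈ Ioc (0:ℝ) (1/2), u (1/2) ≤ u s := by
    intro s hs
    have hsubs : Icc s (1/2:ℝ) ⊆ Ioo (0:ℝ) 1 := fun x hx =>
      ⟨lt_of_lt_of_le hs.1 hx.1, by linarith [hx.2]⟩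
    have hii2 : IntervalIntegrable u' volume s (1/2) := by
      apply ContinuousOn.intervalIntegrable
      rw [uIcc_of_le hs.2]
      exact hcont'.mono (fun x hx => ⟨(hsubs hx).1, (hsubs hx).2.le⟩)
    have hftc2 : ∫ t in s..(1/2:ℝ), u' t = u (1/2) - u s := by
      apply intervalIntegral.integral_eq_sub_of_hasDerivAt _ hii2
      intro x hx
      rw [uIcc_of_le hs.2] at hx
      exact hDA x (hsubs hx)
    have hmono2 : ∫ t in s..(1/2:ℝ), u' t ≤ ∫ _t in s..(1/2:ℝ), (0:ℝ) := by
      apply intervalIntegral.integral_mono_on hs.2 hii2 intervalIntegrable_const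
      intro x hx; exact (hneg x (hsubs hx)).le
    simp only [intervalIntegral.integral_const, smul_eq_mul, mul_zero] at hmono2
    linarith [hftc2 ▸ hmono2]
  -- pointwise bound A ≤ 4^(p-1) * (u s)^(p-1)
  have hptA : ∀ s ∈ Ioc (0:ℝ) (1/2), A ≤ (4:ℝ)^(p-1) * (u s)^(p-1) := by
    intro s hs
    have hus : 0 < u s := hupos s ⟨hs.1, by linarith [hs.2]⟩
    have h1 : B ≤ 4 * u s := by linarith [husl s hs]
    have h2 := Real.rpow_le_rpow hB0 h1 (by linarith : (0:ℝ) ≤ p - 1)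
    rw [hB, ← Real.rpow_mul hA0, one_div, inv_mul_cancel₀ hp1.ne', Real.rpow_one,
      Real.mul_rpow (by norm_num) hus.le] at h2
    exact h2
  -- integrability facts
  have hmeas : MeasurableSet (Ioc (0:ℝ) (1/2)) := measurableSet_Ioc
  have hintpow : IntegrableOn (fun s : ℝ => s ^ e) (Ioc (0:ℝ) (1/2)) :=
    (intervalIntegrable_iff_integrableOn_Ioc_of_le (by norm_num)).mp
      (intervalIntegral.intervalIntegrable_rpow' (by linarith))
  have hsubset : Ioc (0:ℝ) (1/2) ⊆ Ioc (0:ℝ) 1 := Ioc_subset_Ioc_right (by norm_num)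
  have hcpow : ContinuousOn (fun s : ℝ => s ^ e) (Ioc (0:ℝ) (1/2)) :=
    ContinuousOn.rpow_const continuousOn_id (fun x hx => Or.inl (ne_of_gt hx.1))
  have hcu : ContinuousOn (fun s : ℝ => (u s) ^ (p-1)) (Ioc (0:ℝ) (1/2)) :=
    ContinuousOn.rpow_const (hcontu.mono hsubset) (fun x hx => Or.inr (by linarith))
  have hint2 : IntegrableOn (fun s : ℝ => s ^ e * (u s)^(p-1)) (Ioc (0:ℝ) (1/2)) := by
    apply Integrable.mono
      (g := fun s : ℝ => s ^ e + s ^ e * (|u s|^p + |u' s|^p))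
    · exact hintpow.add (hint.mono_set hsubset)
    · exact (hcpow.mul hcu).aestronglyMeasurable hmeas
    · rw [ae_restrict_iff' hmeas]
      filter_upwards with x hx
      have hx0 : (0:ℝ) < x := hx.1
      have hxe : (0:ℝ) ≤ x ^ e := Real.rpow_nonneg hx0.le _
      have hux : 0 < u x := hupos x ⟨hx.1, by linarith [hx.2]⟩
      have hup : (0:ℝ) ≤ (u x)^(p-1) := Real.rpow_nonneg hux.le _
      have hcase : (u x)^(p-1) ≤ 1 + |u x|^p := by
        rcases le_total (u x) 1 with h | h
        · have := Real.rpow_le_one hux.le h (by linarith : (0:ℝ) ≤ p - 1)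
          have : (0:ℝ) ≤ |u x|^p := Real.rpow_nonneg (abs_nonneg _) _
          linarith [Real.rpow_le_one hux.le h (by linarith : (0:ℝ) ≤ p - 1)]
        · have h2 : (u x)^(p-1) ≤ (u x)^p :=
            Real.rpow_le_rpow_of_exponent_le h (by linarith)
          rw [abs_of_pos hux]; linarith
      have hup' : (0:ℝ) ≤ |u' x|^p := Real.rpow_nonneg (abs_nonneg _) _
      rw [Real.norm_eq_abs, Real.norm_eq_abs, abs_of_nonneg (mul_nonneg hxe hup),
        abs_of_nonneg (by nlinarith : (0:ℝ) ≤ x ^ e + x ^ e * (|u x|^p + |u' x|^p))]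
      nlinarith
  have hint2' : IntegrableOn
      (fun s : ℝ => s ^ e * ((4:ℝ)^(p-1) * (u s)^(p-1))) (Ioc (0:ℝ) (1/2)) := by
    have := hint2.const_mul ((4:ℝ)^(p-1))
    apply this.congr
    filter_upwards with x
    ring
  have hint1 : IntegrableOn (fun s : ℝ => s ^ e * A) (Ioc (0:ℝ) (1/2)) :=
    hintpow.mul_const A
  have hcomp : ∫ s in Ioc (0:ℝ) (1/2), s ^ e * A
      ≤ ∫ s in Ioc (0:ℝ) (1/2), s ^ e * ((4:ℝ)^(p-1) * (u s)^(p-1)) := by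
    apply setIntegral_mono_on hint1 hint2' hmeas
    intro x hx
    have hxe : (0:ℝ) ≤ x ^ e := Real.rpow_nonneg hx.1.le _
    exact mul_le_mul_of_nonneg_left (hptA x hx) hxe
  have hval : ∫ s in Ioc (0:ℝ) (1/2), s ^ e = (1/2:ℝ)^(n:ℝ)/n := by
    rw [← intervalIntegral.integral_of_le (by norm_num : (0:ℝ) ≤ 1/2),
      integral_rpow (Or.inl (by linarith : (-1:ℝ) < e)),
      show e + 1 = (n:ℝ) by rw [he]; ring,
      Real.zero_rpow (Nat.cast_ne_zero.mpr (by omega))]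
    ring
  have hlhs : ∫ s in Ioc (0:ℝ) (1/2), s ^ e * A
      = ((1/2:ℝ)^(n:ℝ)/n) * A := by
    rw [← hval]; exact integral_mul_const _ _
  have hrhs : ∫ s in Ioc (0:ℝ) (1/2), s ^ e * ((4:ℝ)^(p-1) * (u s)^(p-1))
      = (4:ℝ)^(p-1) * ∫ s in Ioc (0:ℝ) (1/2), s ^ e * (u s)^(p-1) := by
    rw [← MeasureTheory.integral_const_mul]
    congr 1; funext x; ring
  rw [hlhs, hrhs] at hcomp
  rw [div_mul_eq_mul_div, le_div_iff₀ hV]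
  linarith
end
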